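/- arXiv:2007.00964 — 2 statements merged into one kernel-verified Lean document; each statement's English description precedes it below -/
import Mathlib

section
/- (Fractional Riemann–Lebesgue lemma) For every f ∈ L^1(R) and α not an integer multiple of π, |(F_α f)(x)| → 0 as |x| → ∞. -/
open MeasureTheory Complex Real Filter

noncomputable def Aa (α : ℝ) : ℂ := (1 - Complex.I * (Real.cot α : ℂ)) ^ ((1 : ℂ)/2)

noncomputable def frftKernel (α : ℝ) (x t : ℝ) : ℂ :=
  Aa α * Complex.exp (2 * Real.pi * Complex.I *
    (((t : ℂ)^2/2) * (Real.cot α : ℂ) - (x : ℂ) * (t : ℂ) * ((Real.sin α : ℂ))⁻¹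
      + ((x : ℂ)^2/2) * (Real.cot α : ℂ)))

noncomputable def frft (α : ℝ) (f : ℝ → ℂ) (x : ℝ) : ℂ :=
  ∫ t : ℝ, frftKernel α x t * f t

/-!
Completing the square in the phase, `F_α f (x)` is the unimodular chirp `e^{πi x² cot α}` times
`A_α` times the ordinary Fourier transform of the chirp-modulated function `e^{πi t² cot α} f(t)`,
evaluated at `x / sin α`. The classical Riemann–Lebesgue lemma and the properness of
`x ↦ x / sin α` (for `sin α ≠ 0`) conclude.
-/

open FourierTransform

noncomputable def chirp (c t : ℝ) : ℂ :=
  Complex.exp (2 * π * I * ((t : ℂ) ^ 2 / 2 * c))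

theorem norm_chirp (c t : ℝ) : ‖chirp c t‖ = 1 := by
  have h : 2 * π * I * ((t : ℂ) ^ 2 / 2 * c) = ((π * t ^ 2 * c : ℝ) : ℂ) * I := by
    push_cast; ring
  rw [chirp, h, Complex.norm_exp_ofReal_mul_I]

theorem frft_eq_chirp_mul_fourier (α : ℝ) (f : ℝ → ℂ) (x : ℝ) :
    frft α f x = Aa α * chirp (cot α) x * 𝓕 (fun t ↦ chirp (cot α) t * f t) (x / Real.sin α) := by
  rw [Real.fourier_real_eq_integral_exp_smul, frft, ← integral_const_mul]
  congr 1 with t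
  simp only [frftKernel, chirp, smul_eq_mul, mul_assoc]
  rw [← mul_assoc (cexp _), ← Complex.exp_add, ← mul_assoc (cexp _), ← Complex.exp_add]
  congr 3
  push_cast
  field_simp
  ring

theorem norm_frft_eq (α : ℝ) (f : ℝ → ℂ) (x : ℝ) :
    ‖frft α f x‖ = ‖Aa α‖ * ‖𝓕 (fun t ↦ chirp (cot α) t * f t) (x / Real.sin α)‖ := by
  rw [frft_eq_chirp_mul_fourier, norm_mul, norm_mul, norm_chirp, mul_one]

theorem frft_riemann_lebesgue_general (f : ℝ → ℂ) (α : ℝ)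
    (hα : ∀ n : ℤ, α ≠ n * Real.pi) :
    Tendsto (fun x : ℝ => ‖frft α f x‖) (Filter.cocompact ℝ) (nhds 0) := by
  have hsin : Real.sin α ≠ 0 := Real.sin_ne_zero_iff.mpr fun n hn ↦ hα n hn.symm
  have hscale : Tendsto (fun x : ℝ ↦ x / Real.sin α) (cocompact ℝ) (cocompact ℝ) := by
    simpa only [div_eq_mul_inv] using tendsto_cocompact_mul_right₀ (inv_ne_zero hsin)
  have hRL := ((Real.zero_at_infty_fourier (fun t ↦ chirp (cot α) t * f t)).comp hscale).norm
  simpa only [norm_frft_eq, Function.comp_apply, norm_zero, mul_zero] using hRL.const_mul ‖Aa α‖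

theorem frft_riemann_lebesgue (f : ℝ → ℂ) (hf : Integrable f) (α : ℝ)
    (hα : ∀ n : ℤ, α ≠ n * Real.pi) :
    Tendsto (fun x : ℝ => ‖frft α f x‖) (Filter.cocompact ℝ) (nhds 0) :=
  frft_riemann_lebesgue_general f α hα
end

section
/- Let α not be an integer multiple of π, f ∈ L^1(R), Φ ∈ L^1(R), and set φ = FΦ (classical Fourier transform), Φ_α(x) = Φ(x csc α). Then for every ε > 0 and t ∈ R, ∫_R (F_α f)(x) K_{−α}(x,t) Φ_α(εx) dx = (f ∗_α φ̃_ε)(t), where φ̃(x) = φ(−x) and φ̃_ε(x) = ε^{−1}φ̃(x/ε). -/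
open MeasureTheory Complex Real Filter
open scoped ENNReal

noncomputable def fconv (α : ℝ) (f g : ℝ → ℂ) (x : ℝ) : ℂ :=
  Complex.exp (-(Real.pi : ℂ) * Complex.I * (x : ℂ)^2 * (Real.cot α : ℂ)) *
    ∫ t : ℝ, Complex.exp ((Real.pi : ℂ) * Complex.I * (t : ℂ)^2 * (Real.cot α : ℂ)) *
      f t * g (x - t)

noncomputable def dil (ε : ℝ) (φ : ℝ → ℂ) (x : ℝ) : ℂ := (ε : ℂ)⁻¹ * φ (x / ε)

noncomputable def classicalFT (g : ℝ → ℂ) (x : ℝ) : ℂ :=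
  ∫ t : ℝ, g t * Complex.exp (-2 * Real.pi * Complex.I * (x : ℂ) * (t : ℂ))
/-! Expanding `F_α f` and exchanging the integrals (both kernels are unimodular up to the
constant `A_α`), the product `K_α(x,u) K_{-α}(x,t)` is `|csc α|` times the chirp factors
`e^{πi cot α (u² - t²)}` times the plane wave `e^{-2πi (u - t) x csc α}`. Integrated in `x`
against `Φ(εx csc α)` this is `(|sin α| / ε) (FΦ)((u - t)/ε)`, and since
`A_α A_{-α} = |A_α|² = |csc α|` the constants collapse to the `ε⁻¹` of the dilation. -/

theorem Real.cot_neg (x : ℝ) : Real.cot (-x) = -Real.cot x := by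
  simp [Real.cot_eq_cos_div_sin, div_neg]

theorem Complex.cpow_half_mul_conj_cpow_half {z : ℂ} (hz : z.arg ≠ π) :
    z ^ (1 / 2 : ℂ) * (starRingEnd ℂ) z ^ (1 / 2 : ℂ) = ‖z‖ := by
  have hhalf : (1 / 2 : ℂ) = ((1 / 2 : ℝ) : ℂ) := by push_cast; rfl
  rw [conj_cpow z _ hz, hhalf, Complex.conj_ofReal, Complex.mul_conj', norm_cpow_real,
    ← Real.sqrt_eq_rpow, ← Complex.ofReal_pow, Real.sq_sqrt (norm_nonneg z)]

theorem Complex.norm_one_sub_I_mul_ofReal (c : ℝ) : ‖1 - I * (c : ℂ)‖ = √(1 + c ^ 2) := by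
  rw [Complex.norm_def, Complex.normSq_apply]
  simp only [sub_re, one_re, mul_re, I_re, ofReal_re, I_im, ofReal_im, sub_im, one_im, mul_im]
  ring_nf

theorem Real.sqrt_one_add_cot_sq {x : ℝ} (hs : Real.sin x ≠ 0) :
    √(1 + Real.cot x ^ 2) = |Real.sin x|⁻¹ := by
  rw [← Real.sqrt_sq_eq_abs, ← Real.sqrt_inv, Real.cot_eq_cos_div_sin]
  congr 1
  field_simp
  linarith [Real.sin_sq_add_cos_sq x]

theorem Aa_mul_Aa_neg {α : ℝ} (hs : Real.sin α ≠ 0) :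
    Aa α * Aa (-α) = ((|Real.sin α|⁻¹ : ℝ) : ℂ) := by
  set c := Real.cot α with hc
  have harg : (1 - Complex.I * (c : ℂ)).arg ≠ π := fun h => by
    have := (Complex.arg_eq_pi_iff.mp h).1
    norm_num at this
  have hconj : (starRingEnd ℂ) (1 - Complex.I * (c : ℂ)) =
      1 - Complex.I * (Real.cot (-α) : ℂ) := by
    simp [Real.cot_neg, ← hc, Complex.conj_I]
  rw [Aa, Aa, ← hconj, Complex.cpow_half_mul_conj_cpow_half harg,
    Complex.norm_one_sub_I_mul_ofReal, Real.sqrt_one_add_cot_sq hs]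

theorem norm_frftKernel (α x t : ℝ) : ‖frftKernel α x t‖ = ‖Aa α‖ := by
  have hphase : 2 * (π : ℂ) * Complex.I * (((t : ℂ) ^ 2 / 2) * (Real.cot α : ℂ) -
      (x : ℂ) * (t : ℂ) * ((Real.sin α : ℂ))⁻¹ + ((x : ℂ) ^ 2 / 2) * (Real.cot α : ℂ)) =
      ((2 * π * (t ^ 2 / 2 * Real.cot α - x * t * (Real.sin α)⁻¹ + x ^ 2 / 2 * Real.cot α) : ℝ)
        : ℂ) * Complex.I := by
    push_cast
    ring
  rw [frftKernel, norm_mul, hphase, Complex.norm_exp_ofReal_mul_I, mul_one]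

theorem integrable_frftKernel_mul_frftKernel_neg_mul_prod (α t : ℝ) {g h : ℝ → ℂ}
    (hg : Integrable g) (hh : Integrable h) :
    Integrable (fun p : ℝ × ℝ => frftKernel α p.1 p.2 * frftKernel (-α) p.1 t * g p.1 * h p.2)
      (volume.prod volume) := by
  have hK : Continuous fun p : ℝ × ℝ => frftKernel α p.1 p.2 * frftKernel (-α) p.1 t := by
    unfold frftKernel
    fun_prop
  refine ((hg.mul_prod hh).bdd_mul (c := ‖Aa α‖ * ‖Aa (-α)‖) hK.aestronglyMeasurable
    (ae_of_all _ fun p => by simp [norm_frftKernel])).congr (ae_of_all _ fun p => ?_)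
  simp only [mul_assoc]

theorem integral_comp_mul_left_eq_classicalFT (Φ : ℝ → ℂ) (k ξ : ℝ) :
    ∫ x : ℝ, Complex.exp (-2 * π * Complex.I * ξ * ((k * x : ℝ) : ℂ)) * Φ (k * x) =
      |k⁻¹| * classicalFT Φ ξ := by
  rw [Measure.integral_comp_mul_left (fun y : ℝ => Complex.exp (-2 * π * Complex.I * ξ * y) * Φ y),
    classicalFT, Complex.real_smul]
  simp only [mul_comm]

theorem frftKernel_mul_frftKernel_neg {α : ℝ} (hs : Real.sin α ≠ 0) (x u t : ℝ) :
    frftKernel α x u * frftKernel (-α) x t =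
      ((|Real.sin α|⁻¹ : ℝ) : ℂ) *
        (Complex.exp (-(π : ℂ) * Complex.I * (t : ℂ) ^ 2 * (Real.cot α : ℂ)) *
          Complex.exp ((π : ℂ) * Complex.I * (u : ℂ) ^ 2 * (Real.cot α : ℂ))) *
        Complex.exp (-2 * π * Complex.I * (u - t) * x * (Real.sin α : ℂ)⁻¹) := by
  rw [← Aa_mul_Aa_neg hs, ← Complex.exp_add, mul_assoc, ← Complex.exp_add, frftKernel, frftKernel,
    mul_mul_mul_comm, ← Complex.exp_add, Real.cot_neg, Real.sin_neg]
  congr 2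
  push_cast
  ring

theorem integral_frftKernel_mul_frftKernel_neg_mul {α : ℝ} (hs : Real.sin α ≠ 0) (Φ : ℝ → ℂ)
    {ε : ℝ} (hε : 0 < ε) (u t : ℝ) :
    ∫ x : ℝ, frftKernel α x u * frftKernel (-α) x t * Φ (ε * x * (Real.sin α)⁻¹) =
      Complex.exp (-(π : ℂ) * Complex.I * (t : ℂ) ^ 2 * (Real.cot α : ℂ)) *
        Complex.exp ((π : ℂ) * Complex.I * (u : ℂ) ^ 2 * (Real.cot α : ℂ)) *
        dil ε (fun x => classicalFT Φ (-x)) (t - u) := by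
  set k := ε * (Real.sin α)⁻¹
  have hphase : ∀ x : ℝ, Complex.exp (-2 * π * Complex.I * (u - t) * x * (Real.sin α : ℂ)⁻¹) *
      Φ (ε * x * (Real.sin α)⁻¹) =
      Complex.exp (-2 * π * Complex.I * ((u - t) / ε : ℝ) * ((k * x : ℝ) : ℂ)) * Φ (k * x) := by
    intro x
    have hε' : (ε : ℂ) ≠ 0 := by exact_mod_cast hε.ne'
    rw [show k * x = ε * x * (Real.sin α)⁻¹ by ring]
    congr 2
    push_cast
    field_simp
  have hconst : |Real.sin α|⁻¹ * |k⁻¹| = ε⁻¹ := by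
    have : |Real.sin α| ≠ 0 := abs_ne_zero.mpr hs
    rw [mul_inv, inv_inv, abs_mul, abs_of_pos (inv_pos.mpr hε)]
    field_simp
  simp_rw [frftKernel_mul_frftKernel_neg hs, mul_assoc _ (Complex.exp _) (Φ _), hphase,
    integral_const_mul, integral_comp_mul_left_eq_classicalFT, dil]
  rw [show -((t - u) / ε) = (u - t) / ε by ring, ← Complex.ofReal_inv, ← hconst]
  push_cast
  ring

theorem frft_phi_means_eq_fconv (α : ℝ) (hα : ∀ n : ℤ, α ≠ n * Real.pi)
    (f : ℝ → ℂ) (hf : Integrable f) (Φ : ℝ → ℂ) (hΦ : Integrable Φ)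
    (ε : ℝ) (hε : 0 < ε) (t : ℝ) :
    (∫ x : ℝ, frft α f x * frftKernel (-α) x t * Φ ((ε * x) * (Real.sin α)⁻¹)) =
      fconv α f (dil ε (fun x => classicalFT Φ (-x))) t := by
  have hs : Real.sin α ≠ 0 := fun h => by
    obtain ⟨n, hn⟩ := Real.sin_eq_zero_iff.mp h
    exact hα n hn.symm
  have hΦs : Integrable fun x => Φ (ε * x * (Real.sin α)⁻¹) := by
    simpa only [mul_right_comm ε] using hΦ.comp_mul_left' (mul_ne_zero hε.ne' (inv_ne_zero hs))
  calc (∫ x : ℝ, frft α f x * frftKernel (-α) x t * Φ (ε * x * (Real.sin α)⁻¹))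
      = ∫ x, ∫ u, frftKernel α x u * frftKernel (-α) x t * Φ (ε * x * (Real.sin α)⁻¹) * f u := by
        congr 1 with x
        rw [frft, mul_assoc, ← integral_mul_const]
        congr 1 with u
        ring
    _ = ∫ u, (∫ x, frftKernel α x u * frftKernel (-α) x t * Φ (ε * x * (Real.sin α)⁻¹)) * f u := by
        rw [integral_integral_swap
          (integrable_frftKernel_mul_frftKernel_neg_mul_prod α t hΦs hf)]
        simp_rw [integral_mul_const]
    _ = fconv α f (dil ε (fun x => classicalFT Φ (-x))) t := by
        simp_rw [integral_frftKernel_mul_frftKernel_neg_mul hs Φ hε, fconv, ← integral_const_mul]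
        congr 1 with u
        ring
end
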